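/- Let f^* and f_* denote the measurable majorant and minorant of a bounded map f(R,X,W), where R takes finitely many values r with indicator events {R=r}. Then f(R,X,W)^* ≤ Σ_r 1{R=r} (f(r,X,W))^{*_{X,W}} and f(R,X,W)_* ≥ Σ_r 1{R=r} (f(r,X,W))_{*_{X,W}}, where *_{X,W} denotes the majorant/minorant taken with respect to (X,W) only, with r fixed. -/
import Mathlib


open MeasureTheory

/-- `g` is the measurable majorant `f^*` of `f` w.r.t. `μ`: it is measurable, dominates `f`
pointwise, and is a.e. below any measurable function dominating `f`. -/
def IsMeasMajorant {α : Type*} [MeasurableSpace α] (μ : Measure α) (f g : α → ℝ) : Prop :=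
  Measurable g ∧ (∀ x, f x ≤ g x) ∧
    ∀ h : α → ℝ, Measurable h → (∀ x, f x ≤ h x) → g ≤ᵐ[μ] h

/-- `g` is the measurable minorant `f_*` of `f` w.r.t. `μ`. -/
def IsMeasMinorant {α : Type*} [MeasurableSpace α] (μ : Measure α) (f g : α → ℝ) : Prop :=
  Measurable g ∧ (∀ x, g x ≤ f x) ∧
    ∀ h : α → ℝ, Measurable h → (∀ x, h x ≤ f x) → h ≤ᵐ[μ] g

/-- For a bounded map `f(R,X,W)` with `R` taking finitely many values,
`f(R,X,W)^* ≤ Σ_r 1{R=r} (f(r,·))^{*_{X,W}}` and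
`f(R,X,W)_* ≥ Σ_r 1{R=r} (f(r,·))_{*_{X,W}}` (a.e.), where the starred envelopes on the
right are taken with respect to `(X,W)` only, `r` held fixed. -/
theorem stmt_4 {Ω α ρ : Type*} [MeasurableSpace Ω] [MeasurableSpace α]
    [MeasurableSpace ρ] [Fintype ρ] [DecidableEq ρ] [MeasurableSingletonClass ρ]
    (μ : Measure Ω) [IsProbabilityMeasure μ]
    (R : Ω → ρ) (Y : Ω → α) (hR : Measurable R) (hY : Measurable Y)
    (f : ρ → α → ℝ) (C : ℝ) (hbdd : ∀ r x, |f r x| ≤ C)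
    (Fstar Flow : Ω → ℝ)
    (hFstar : IsMeasMajorant μ (fun ω => f (R ω) (Y ω)) Fstar)
    (hFlow : IsMeasMinorant μ (fun ω => f (R ω) (Y ω)) Flow)
    (M m : ρ → α → ℝ)
    (hM : ∀ r, Measurable (M r) ∧ IsMeasMajorant (μ.map Y) (f r) (M r))
    (hm : ∀ r, Measurable (m r) ∧ IsMeasMinorant (μ.map Y) (f r) (m r)) :
    (Fstar ≤ᵐ[μ] fun ω => ∑ r : ρ, (if R ω = r then (1 : ℝ) else 0) * M r (Y ω)) ∧
    ((fun ω => ∑ r : ρ, (if R ω = r then (1 : ℝ) else 0) * m r (Y ω)) ≤ᵐ[μ] Flow) := by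
  have key : ∀ (g : ρ → α → ℝ), (∀ r, Measurable (g r)) →
      Measurable (fun ω => ∑ r : ρ, (if R ω = r then (1 : ℝ) else 0) * g r (Y ω)) := by
    intro g hg
    exact Finset.measurable_sum _ fun r _ =>
      (Measurable.ite (hR (measurableSet_singleton r)) measurable_const measurable_const).mul
        ((hg r).comp hY)
  have sumM : ∀ ω, (∑ r : ρ, (if R ω = r then (1 : ℝ) else 0) * M r (Y ω)) = M (R ω) (Y ω) := by
    intro ω; simp [ite_mul]
  have summ : ∀ ω, (∑ r : ρ, (if R ω = r then (1 : ℝ) else 0) * m r (Y ω)) = m (R ω) (Y ω) := by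
    intro ω; simp [ite_mul]
  constructor
  · exact hFstar.2.2 _ (key M fun r => (hM r).1)
      (fun ω => by rw [sumM ω]; exact (hM (R ω)).2.2.1 (Y ω))
  · exact hFlow.2.2 _ (key m fun r => (hm r).1)
      (fun ω => by rw [summ ω]; exact (hm (R ω)).2.2.1 (Y ω))
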